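/- arXiv:2211.03999 — 3 statements merged into one kernel-verified Lean document; each statement's English description precedes it below -/
import Mathlib

section
/- (Second moments of Haar random 2-qubit gates.) Let μ be the Haar probability measure on the compact group U(4) = Matrix.unitaryGroup (Fin 4) ℂ, and let p, q be normalized 2-qubit Paulis. Then ∫ Tr(p·U·q·U†)² dμ(U) equals: 1 if p = q = (I⊗I)/2; 0 if exactly one of p, q equals (I⊗I)/2; and 1/15 if both p and q differ from (I⊗I)/2. -/
open Matrix MeasureTheory

/-- Labels for the four single-qubit Pauli matrices. -/
inductive PauliLabel : Type
  | I | X | Y | Z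
  deriving DecidableEq

instance instFintypePauliLabel : Fintype PauliLabel where
  elems := {PauliLabel.I, PauliLabel.X, PauliLabel.Y, PauliLabel.Z}
  complete := by intro x; cases x <;> simp

/-- The single-qubit Pauli matrices over `ℂ`. -/
noncomputable def pauliMat : PauliLabel → Matrix (Fin 2) (Fin 2) ℂ
  | PauliLabel.I => !![1, 0; 0, 1]
  | PauliLabel.X => !![0, 1; 1, 0]
  | PauliLabel.Y => !![0, -Complex.I; Complex.I, 0]
  | PauliLabel.Z => !![1, 0; 0, -1]

/-- The Kronecker product of two `2×2` complex matrices, written out as a `4×4` matrix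
(rows/columns ordered as `00, 01, 10, 11`). -/
noncomputable def kron2 (A B : Matrix (Fin 2) (Fin 2) ℂ) : Matrix (Fin 4) (Fin 4) ℂ :=
  !![A 0 0 * B 0 0, A 0 0 * B 0 1, A 0 1 * B 0 0, A 0 1 * B 0 1;
     A 0 0 * B 1 0, A 0 0 * B 1 1, A 0 1 * B 1 0, A 0 1 * B 1 1;
     A 1 0 * B 0 0, A 1 0 * B 0 1, A 1 1 * B 0 0, A 1 1 * B 0 1;
     A 1 0 * B 1 0, A 1 0 * B 1 1, A 1 1 * B 1 0, A 1 1 * B 1 1]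

/-- The 2-qubit Pauli string `σ_a ⊗ σ_b`, as a `4×4` complex matrix. -/
noncomputable def pauli2 (a b : PauliLabel) : Matrix (Fin 4) (Fin 4) ℂ :=
  kron2 (pauliMat a) (pauliMat b)

lemma kron2_mul (A B C D : Matrix (Fin 2) (Fin 2) ℂ) :
    kron2 A B * kron2 C D = kron2 (A * C) (B * D) := by
  ext i j
  fin_cases i <;> fin_cases j <;>
    simp [kron2, Matrix.mul_apply, Fin.sum_univ_four, Fin.sum_univ_two] <;> ring

lemma kron2_star (A B : Matrix (Fin 2) (Fin 2) ℂ) :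
    star (kron2 A B) = kron2 (star A) (star B) := by
  ext i j
  fin_cases i <;> fin_cases j <;>
    simp [kron2, Matrix.star_eq_conjTranspose, Matrix.conjTranspose_apply]

lemma kron2_one : kron2 1 1 = 1 := by
  ext i j
  fin_cases i <;> fin_cases j <;>
    simp [kron2, Matrix.one_apply, Matrix.vecHead, Matrix.vecTail]

lemma pauliMat_mul_star (a : PauliLabel) : pauliMat a * star (pauliMat a) = 1 := by
  cases a <;>
    · ext i j
      fin_cases i <;> fin_cases j <;>
        simp [pauliMat, Matrix.mul_apply, Fin.sum_univ_two, Matrix.one_apply,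
          Matrix.star_eq_conjTranspose, Matrix.conjTranspose_apply]

/-- Every 2-qubit Pauli string is a unitary `4×4` matrix. -/
lemma pauli2_mem_unitaryGroup (a b : PauliLabel) :
    pauli2 a b ∈ Matrix.unitaryGroup (Fin 4) ℂ := by
  rw [Matrix.mem_unitaryGroup_iff, pauli2, kron2_star, kron2_mul,
    pauliMat_mul_star, pauliMat_mul_star, kron2_one]

/-- The 2-qubit Pauli string `σ_a ⊗ σ_b` as an element of the unitary group `U(4)`. -/
noncomputable def pauli2U (a b : PauliLabel) : Matrix.unitaryGroup (Fin 4) ℂ :=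
  ⟨pauli2 a b, pauli2_mem_unitaryGroup a b⟩

/-- The normalized 2-qubit Pauli `(σ_a ⊗ σ_b) / 2`. -/
noncomputable def npauli2 (p : PauliLabel × PauliLabel) : Matrix (Fin 4) (Fin 4) ℂ :=
  (2 : ℂ)⁻¹ • pauli2 p.1 p.2

/-- The identity label pair, corresponding to the normalized Pauli `(I ⊗ I)/2`. -/
def idLabel : PauliLabel × PauliLabel := (PauliLabel.I, PauliLabel.I)


/-!
Write `J(r) = ∫ Tr(P_r U Q U†)² dμ(U)` for the normalized Paulis `P_r` and a fixed `Q`.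
If `P_r` or `Q` is `(I⊗I)/2`, the integrand is constant: `1` if both are, and `0` otherwise
since every other Pauli is traceless. The normalized Paulis are an orthonormal basis for the
pairing `(A, B) ↦ Tr(AB)`, so `∑_r Tr(P_r A)² = Tr(A²)`; with `A = UQU†` this gives
`∑_r J(r) = Tr(Q²) = 1`. Left invariance of the Haar measure makes `J` constant on orbits of
conjugation by unitaries, and already the Clifford gates `S`, `V` (on either qubit), `SWAP` and
`CNOT` move every non-identity Pauli to `X⊗I`. So for `Q ≠ (I⊗I)/2` we get `J(I⊗I) = 0` while
the 15 other values of `J` are equal and sum to `1`.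
-/

section UnitaryGroup

variable {n 𝕜 : Type*} [Fintype n] [DecidableEq n] [RCLike 𝕜]

instance Matrix.unitaryGroup.compactSpace : CompactSpace (unitaryGroup n 𝕜) :=
  isCompact_iff_compactSpace.mp <|
    (isCompact_univ_pi fun _ => isCompact_univ_pi fun _ =>
      isCompact_closedBall (0 : 𝕜) 1).of_isClosed_subset (isClosed_unitary (R := Matrix n n 𝕜))
      fun U hU i _ j _ => by simpa using entry_norm_bound_of_unitary hU i j

theorem Matrix.UnitaryGroup.conjTranspose_mul_self (U : unitaryGroup n 𝕜) :
    (U : Matrix n n 𝕜)ᴴ * (U : Matrix n n 𝕜) = 1 :=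
  Unitary.star_mul_self_of_mem U.2

theorem Matrix.UnitaryGroup.mul_conjTranspose_self (U : unitaryGroup n 𝕜) :
    (U : Matrix n n 𝕜) * (U : Matrix n n 𝕜)ᴴ = 1 :=
  Unitary.mul_star_self_of_mem U.2

theorem Matrix.UnitaryGroup.trace_conj (U : unitaryGroup n 𝕜) (Q : Matrix n n 𝕜) :
    ((U : Matrix n n 𝕜) * Q * (U : Matrix n n 𝕜)ᴴ).trace = Q.trace := by
  rw [trace_mul_cycle, UnitaryGroup.conjTranspose_mul_self, Matrix.one_mul]

/-- `hP` is the completeness relation of a basis orthonormal for `(A, B) ↦ Tr (A * B)`. -/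
theorem Matrix.sum_trace_mul_mul_trace_mul {ι R : Type*} [Fintype ι] [CommSemiring R]
    (P : ι → Matrix n n R)
    (hP : ∀ i j k l, ∑ r, P r i j * P r k l = if i = l ∧ j = k then 1 else 0)
    (A B : Matrix n n R) :
    ∑ r, (P r * A).trace * (P r * B).trace = (A * B).trace := by
  calc ∑ r, (P r * A).trace * (P r * B).trace
      = ∑ i, ∑ j, ∑ k, ∑ l, A l k * B j i * ∑ r, P r k l * P r i j := by
        simp only [Matrix.trace, Matrix.diag, Matrix.mul_apply, Finset.sum_mul, Finset.mul_sum]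
        rw [Finset.sum_comm]
        refine Finset.sum_congr rfl fun i _ => ?_
        rw [Finset.sum_comm]
        refine Finset.sum_congr rfl fun j _ => ?_
        rw [Finset.sum_comm]
        refine Finset.sum_congr rfl fun k _ => ?_
        rw [Finset.sum_comm]
        refine Finset.sum_congr rfl fun l _ => Finset.sum_congr rfl fun r _ => ?_
        ring
    _ = (A * B).trace := by simp [hP, Matrix.trace, Matrix.mul_apply, ite_and]

variable [MeasurableSpace (unitaryGroup n 𝕜)] (μ : Measure (unitaryGroup n 𝕜))

noncomputable def secondMoment (P Q : Matrix n n 𝕜) : 𝕜 :=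
  ∫ U : unitaryGroup n 𝕜, (P * (U : Matrix n n 𝕜) * Q * (U : Matrix n n 𝕜)ᴴ).trace ^ 2 ∂μ

theorem integrable_trace_conj_sq [BorelSpace (unitaryGroup n 𝕜)] [IsFiniteMeasure μ]
    (P Q : Matrix n n 𝕜) :
    Integrable (fun U : unitaryGroup n 𝕜 =>
      (P * (U : Matrix n n 𝕜) * Q * (U : Matrix n n 𝕜)ᴴ).trace ^ 2) μ := by
  have hU : Continuous fun U : unitaryGroup n 𝕜 => (U : Matrix n n 𝕜) := continuous_subtype_val
  exact (((((continuous_const.matrix_mul hU).matrix_mul continuous_const).matrix_mul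
    hU.matrix_conjTranspose).matrix_trace).pow 2).integrable_of_hasCompactSupport
    (.of_compactSpace _)

theorem secondMoment_conj_left [BorelSpace (unitaryGroup n 𝕜)] [μ.IsMulLeftInvariant]
    (V : unitaryGroup n 𝕜) (P Q : Matrix n n 𝕜) :
    secondMoment μ ((V : Matrix n n 𝕜)ᴴ * P * V) Q = secondMoment μ P Q := by
  rw [secondMoment, secondMoment, ← integral_mul_left_eq_self (fun U : unitaryGroup n 𝕜 =>
    (P * (U : Matrix n n 𝕜) * Q * (U : Matrix n n 𝕜)ᴴ).trace ^ 2) V]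
  refine integral_congr_ae (ae_of_all _ fun U => ?_)
  dsimp only
  rw [UnitaryGroup.mul_val, conjTranspose_mul]
  simp only [← Matrix.mul_assoc]
  rw [trace_mul_comm _ (V : Matrix n n 𝕜)ᴴ]
  simp only [Matrix.mul_assoc]

variable [IsProbabilityMeasure μ]

theorem secondMoment_smul_one_left (c : 𝕜) (Q : Matrix n n 𝕜) :
    secondMoment μ (c • 1) Q = (c * Q.trace) ^ 2 := by
  have h (U : unitaryGroup n 𝕜) :
      ((c • 1) * (U : Matrix n n 𝕜) * Q * (U : Matrix n n 𝕜)ᴴ).trace = c * Q.trace := by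
    rw [Matrix.smul_mul, Matrix.one_mul, Matrix.smul_mul, Matrix.smul_mul, trace_smul,
      UnitaryGroup.trace_conj, smul_eq_mul]
  simp_rw [secondMoment, h]
  simp

theorem secondMoment_smul_one_right (P : Matrix n n 𝕜) (c : 𝕜) :
    secondMoment μ P (c • 1) = (c * P.trace) ^ 2 := by
  have h (U : unitaryGroup n 𝕜) :
      (P * (U : Matrix n n 𝕜) * (c • 1) * (U : Matrix n n 𝕜)ᴴ).trace = c * P.trace := by
    rw [Matrix.mul_smul, Matrix.mul_one, Matrix.smul_mul, Matrix.mul_assoc,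
      UnitaryGroup.mul_conjTranspose_self, Matrix.mul_one, trace_smul, smul_eq_mul]
  simp_rw [secondMoment, h]
  simp

theorem sum_secondMoment_of_completeness [BorelSpace (unitaryGroup n 𝕜)] {ι : Type*}
    [Fintype ι] (P : ι → Matrix n n 𝕜)
    (hP : ∀ i j k l, ∑ r, P r i j * P r k l = if i = l ∧ j = k then 1 else 0)
    (Q : Matrix n n 𝕜) :
    ∑ r, secondMoment μ (P r) Q = (Q * Q).trace := by
  have h (U : unitaryGroup n 𝕜) :
      ∑ r, (P r * (U : Matrix n n 𝕜) * Q * (U : Matrix n n 𝕜)ᴴ).trace ^ 2 = (Q * Q).trace := by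
    set A := (U : Matrix n n 𝕜) * Q * (U : Matrix n n 𝕜)ᴴ
    calc ∑ r, (P r * (U : Matrix n n 𝕜) * Q * (U : Matrix n n 𝕜)ᴴ).trace ^ 2
        = ∑ r, (P r * A).trace * (P r * A).trace := by simp only [A, sq, Matrix.mul_assoc]
      _ = (A * A).trace := sum_trace_mul_mul_trace_mul P hP A A
      _ = ((U : Matrix n n 𝕜) * (Q * Q) * (U : Matrix n n 𝕜)ᴴ).trace := by
        simp only [A, Matrix.mul_assoc, ← Matrix.mul_assoc (U : Matrix n n 𝕜)ᴴ,
          UnitaryGroup.conjTranspose_mul_self, Matrix.one_mul]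
      _ = (Q * Q).trace := UnitaryGroup.trace_conj U _
  simp_rw [secondMoment, ← integral_finsetSum _ fun r _ => integrable_trace_conj_sq μ (P r) Q, h]
  simp

end UnitaryGroup

section Pauli

theorem PauliLabel.univ_eq : (Finset.univ : Finset PauliLabel) = {.I, .X, .Y, .Z} := rfl

theorem pauliMat_I : pauliMat .I = 1 := by
  ext i j
  fin_cases i <;> fin_cases j <;> rfl

theorem pauliMat_mul_self (a : PauliLabel) : pauliMat a * pauliMat a = 1 := by
  cases a <;> ext i j <;> fin_cases i <;> fin_cases j <;>
    simp [pauliMat, Matrix.mul_apply, Fin.sum_univ_two]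

theorem trace_pauliMat_of_ne_I {a : PauliLabel} (ha : a ≠ .I) : (pauliMat a).trace = 0 := by
  cases a <;> simp_all [pauliMat, Matrix.trace, Fin.sum_univ_two]

theorem trace_kron2 (A B : Matrix (Fin 2) (Fin 2) ℂ) :
    (kron2 A B).trace = A.trace * B.trace := by
  simp [kron2, Matrix.trace, Fin.sum_univ_four, Fin.sum_univ_two]
  ring

theorem npauli2_idLabel : npauli2 idLabel = (2 : ℂ)⁻¹ • 1 := by
  rw [npauli2, idLabel, pauli2, pauliMat_I, kron2_one]

theorem trace_npauli2_of_ne_idLabel {r : PauliLabel × PauliLabel} (hr : r ≠ idLabel) :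
    (npauli2 r).trace = 0 := by
  obtain ⟨a, b⟩ := r
  have hab : a ≠ .I ∨ b ≠ .I := by
    by_contra! h
    exact hr (by rw [h.1, h.2, idLabel])
  rcases hab with ha | hb
  · simp [npauli2, pauli2, trace_kron2, trace_pauliMat_of_ne_I ha]
  · simp [npauli2, pauli2, trace_kron2, trace_pauliMat_of_ne_I hb]

theorem trace_npauli2_mul_self (r : PauliLabel × PauliLabel) :
    (npauli2 r * npauli2 r).trace = 1 := by
  simp only [npauli2, Matrix.smul_mul, Matrix.mul_smul, pauli2, kron2_mul, pauliMat_mul_self,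
    kron2_one, smul_smul, trace_smul, trace_one, Fintype.card_fin]
  norm_num

theorem pauliMat_completeness (i j k l : Fin 2) :
    ∑ a, pauliMat a i j * pauliMat a k l = if i = l ∧ j = k then 2 else 0 := by
  rw [PauliLabel.univ_eq]
  fin_cases i <;> fin_cases j <;> fin_cases k <;> fin_cases l <;>
    simp [pauliMat] <;> norm_num

/-- The row and column order `00, 01, 10, 11` of `kron2`. -/
def twoQubitIndex : Fin 2 × Fin 2 ≃ Fin 4 := finProdFinEquiv

theorem kron2_apply_twoQubitIndex (A B : Matrix (Fin 2) (Fin 2) ℂ) (i₁ i₂ j₁ j₂ : Fin 2) :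
    kron2 A B (twoQubitIndex (i₁, i₂)) (twoQubitIndex (j₁, j₂)) = A i₁ j₁ * B i₂ j₂ := by
  fin_cases i₁ <;> fin_cases i₂ <;> fin_cases j₁ <;> fin_cases j₂ <;> rfl

theorem npauli2_completeness (i j k l : Fin 4) :
    ∑ r, npauli2 r i j * npauli2 r k l = if i = l ∧ j = k then 1 else 0 := by
  obtain ⟨⟨i₁, i₂⟩, rfl⟩ := twoQubitIndex.surjective i
  obtain ⟨⟨j₁, j₂⟩, rfl⟩ := twoQubitIndex.surjective j
  obtain ⟨⟨k₁, k₂⟩, rfl⟩ := twoQubitIndex.surjective k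
  obtain ⟨⟨l₁, l₂⟩, rfl⟩ := twoQubitIndex.surjective l
  calc _ = 4⁻¹ * ((∑ a, pauliMat a i₁ j₁ * pauliMat a k₁ l₁) *
          ∑ b, pauliMat b i₂ j₂ * pauliMat b k₂ l₂) := by
        rw [Finset.sum_mul_sum, Finset.mul_sum, Fintype.sum_prod_type]
        refine Finset.sum_congr rfl fun a _ => ?_
        rw [Finset.mul_sum]
        refine Finset.sum_congr rfl fun b _ => ?_
        simp only [npauli2, pauli2, Matrix.smul_apply, smul_eq_mul, kron2_apply_twoQubitIndex]
        ring
    _ = _ := by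
        simp only [pauliMat_completeness, twoQubitIndex.apply_eq_iff_eq, Prod.mk.injEq]
        split_ifs <;> grind

end Pauli

section Clifford

theorem kron2_mem_unitaryGroup {A B : Matrix (Fin 2) (Fin 2) ℂ}
    (hA : A ∈ unitaryGroup (Fin 2) ℂ) (hB : B ∈ unitaryGroup (Fin 2) ℂ) :
    kron2 A B ∈ unitaryGroup (Fin 4) ℂ := by
  rw [mem_unitaryGroup_iff] at hA hB ⊢
  rw [kron2_star, kron2_mul, hA, hB, kron2_one]

theorem kron2_conj (W W' A B : Matrix (Fin 2) (Fin 2) ℂ) :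
    kron2 W W' * kron2 A B * (kron2 W W')ᴴ = kron2 (W * A * Wᴴ) (W' * B * W'ᴴ) := by
  rw [← star_eq_conjTranspose, kron2_star, kron2_mul, kron2_mul]
  rfl

noncomputable def sGate : unitaryGroup (Fin 2) ℂ :=
  ⟨!![1, 0; 0, Complex.I], by
    rw [mem_unitaryGroup_iff]
    ext i j
    fin_cases i <;> fin_cases j <;> simp [Matrix.mul_apply, Fin.sum_univ_two]⟩

noncomputable def vGate : unitaryGroup (Fin 2) ℂ :=
  ⟨!![(1 + Complex.I) / 2, (1 - Complex.I) / 2; (1 - Complex.I) / 2, (1 + Complex.I) / 2], by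
    rw [mem_unitaryGroup_iff]
    ext i j
    fin_cases i <;> fin_cases j <;>
      simp [Matrix.mul_apply, Fin.sum_univ_two, map_ofNat] <;> ring_nf <;>
      simp [Complex.I_sq] <;> ring⟩

noncomputable def swapGate : unitaryGroup (Fin 4) ℂ :=
  ⟨!![1, 0, 0, 0; 0, 0, 1, 0; 0, 1, 0, 0; 0, 0, 0, 1], by
    rw [mem_unitaryGroup_iff]
    ext i j
    fin_cases i <;> fin_cases j <;> simp [Matrix.mul_apply, Fin.sum_univ_four]⟩

noncomputable def cnotGate : unitaryGroup (Fin 4) ℂ :=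
  ⟨!![1, 0, 0, 0; 0, 1, 0, 0; 0, 0, 0, 1; 0, 0, 1, 0], by
    rw [mem_unitaryGroup_iff]
    ext i j
    fin_cases i <;> fin_cases j <;> simp [Matrix.mul_apply, Fin.sum_univ_four]⟩

theorem sGate_conj_pauliMat_X :
    (sGate : Matrix (Fin 2) (Fin 2) ℂ) * pauliMat .X * (sGate : Matrix (Fin 2) (Fin 2) ℂ)ᴴ =
      pauliMat .Y := by
  ext i j
  fin_cases i <;> fin_cases j <;> simp [sGate, pauliMat, Matrix.mul_apply, Fin.sum_univ_two]

theorem vGate_conj_pauliMat_Y :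
    (vGate : Matrix (Fin 2) (Fin 2) ℂ) * pauliMat .Y * (vGate : Matrix (Fin 2) (Fin 2) ℂ)ᴴ =
      pauliMat .Z := by
  ext i j
  fin_cases i <;> fin_cases j <;>
    simp [vGate, pauliMat, Matrix.mul_apply, Fin.sum_univ_two, map_ofNat] <;> ring_nf <;>
    simp [Complex.I_sq]

theorem swapGate_conj_kron2 (A B : Matrix (Fin 2) (Fin 2) ℂ) :
    (swapGate : Matrix (Fin 4) (Fin 4) ℂ) * kron2 A B * (swapGate : Matrix (Fin 4) (Fin 4) ℂ)ᴴ =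
      kron2 B A := by
  ext i j
  fin_cases i <;> fin_cases j <;>
    simp [swapGate, kron2, Matrix.mul_apply, Fin.sum_univ_four, mul_comm]

theorem cnotGate_conj_pauli2_X_I :
    (cnotGate : Matrix (Fin 4) (Fin 4) ℂ) * pauli2 .X .I *
      (cnotGate : Matrix (Fin 4) (Fin 4) ℂ)ᴴ = pauli2 .X .X := by
  ext i j
  fin_cases i <;> fin_cases j <;>
    simp [cnotGate, pauli2, kron2, pauliMat, Matrix.mul_apply, Fin.sum_univ_four]

end Clifford

section SecondMoment

variable [MeasurableSpace (unitaryGroup (Fin 4) ℂ)] (μ : Measure (unitaryGroup (Fin 4) ℂ))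

theorem secondMoment_npauli2_idLabel_left [IsProbabilityMeasure μ]
    (Q : Matrix (Fin 4) (Fin 4) ℂ) :
    secondMoment μ (npauli2 idLabel) Q = (2⁻¹ * Q.trace) ^ 2 := by
  rw [npauli2_idLabel, secondMoment_smul_one_left]

theorem secondMoment_npauli2_idLabel_right [IsProbabilityMeasure μ]
    (P : Matrix (Fin 4) (Fin 4) ℂ) :
    secondMoment μ P (npauli2 idLabel) = (2⁻¹ * P.trace) ^ 2 := by
  rw [npauli2_idLabel, secondMoment_smul_one_right]

variable [BorelSpace (unitaryGroup (Fin 4) ℂ)] [μ.IsMulLeftInvariant]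

section Invariance

variable (Q : Matrix (Fin 4) (Fin 4) ℂ)

theorem secondMoment_npauli2_eq_of_conj (V : unitaryGroup (Fin 4) ℂ)
    {r r' : PauliLabel × PauliLabel}
    (h : (V : Matrix (Fin 4) (Fin 4) ℂ) * pauli2 r.1 r.2 * (V : Matrix (Fin 4) (Fin 4) ℂ)ᴴ =
      pauli2 r'.1 r'.2) :
    secondMoment μ (npauli2 r') Q = secondMoment μ (npauli2 r) Q := by
  rw [← secondMoment_conj_left μ V, npauli2, npauli2, ← h, Matrix.mul_smul, Matrix.smul_mul]
  simp only [← Matrix.mul_assoc, UnitaryGroup.conjTranspose_mul_self, Matrix.one_mul]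
  rw [Matrix.mul_assoc, UnitaryGroup.conjTranspose_mul_self, Matrix.mul_one]

theorem secondMoment_npauli2_eq_of_local_conj (W W' : unitaryGroup (Fin 2) ℂ)
    {a b a' b' : PauliLabel}
    (ha : (W : Matrix (Fin 2) (Fin 2) ℂ) * pauliMat a * (W : Matrix (Fin 2) (Fin 2) ℂ)ᴴ =
      pauliMat a')
    (hb : (W' : Matrix (Fin 2) (Fin 2) ℂ) * pauliMat b * (W' : Matrix (Fin 2) (Fin 2) ℂ)ᴴ =
      pauliMat b') :
    secondMoment μ (npauli2 (a', b')) Q = secondMoment μ (npauli2 (a, b)) Q :=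
  secondMoment_npauli2_eq_of_conj μ Q ⟨_, kron2_mem_unitaryGroup W.2 W'.2⟩ <| by
    rw [pauli2, kron2_conj, ha, hb, pauli2]

theorem secondMoment_npauli2_eq_X_left {a : PauliLabel} (ha : a ≠ .I) (b : PauliLabel) :
    secondMoment μ (npauli2 (a, b)) Q = secondMoment μ (npauli2 (.X, b)) Q := by
  have hb : ((1 : unitaryGroup (Fin 2) ℂ) : Matrix (Fin 2) (Fin 2) ℂ) * pauliMat b *
      ((1 : unitaryGroup (Fin 2) ℂ) : Matrix (Fin 2) (Fin 2) ℂ)ᴴ = pauliMat b := by simp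
  cases a with
  | I => exact absurd rfl ha
  | X => rfl
  | Y => exact secondMoment_npauli2_eq_of_local_conj μ Q sGate 1 sGate_conj_pauliMat_X hb
  | Z =>
    exact (secondMoment_npauli2_eq_of_local_conj μ Q vGate 1 vGate_conj_pauliMat_Y hb).trans
      (secondMoment_npauli2_eq_of_local_conj μ Q sGate 1 sGate_conj_pauliMat_X hb)

theorem secondMoment_npauli2_eq_X_right (a : PauliLabel) {b : PauliLabel} (hb : b ≠ .I) :
    secondMoment μ (npauli2 (a, b)) Q = secondMoment μ (npauli2 (a, .X)) Q := by
  have ha : ((1 : unitaryGroup (Fin 2) ℂ) : Matrix (Fin 2) (Fin 2) ℂ) * pauliMat a *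
      ((1 : unitaryGroup (Fin 2) ℂ) : Matrix (Fin 2) (Fin 2) ℂ)ᴴ = pauliMat a := by simp
  cases b with
  | I => exact absurd rfl hb
  | X => rfl
  | Y => exact secondMoment_npauli2_eq_of_local_conj μ Q 1 sGate ha sGate_conj_pauliMat_X
  | Z =>
    exact (secondMoment_npauli2_eq_of_local_conj μ Q 1 vGate ha vGate_conj_pauliMat_Y).trans
      (secondMoment_npauli2_eq_of_local_conj μ Q 1 sGate ha sGate_conj_pauliMat_X)

theorem secondMoment_npauli2_swap (a b : PauliLabel) :
    secondMoment μ (npauli2 (b, a)) Q = secondMoment μ (npauli2 (a, b)) Q :=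
  secondMoment_npauli2_eq_of_conj μ Q swapGate (swapGate_conj_kron2 _ _)

theorem secondMoment_npauli2_eq_X_I {r : PauliLabel × PauliLabel} (hr : r ≠ idLabel) :
    secondMoment μ (npauli2 r) Q = secondMoment μ (npauli2 (.X, .I)) Q := by
  obtain ⟨a, b⟩ := r
  by_cases ha : a = .I
  · subst ha
    have hb : b ≠ .I := by rintro rfl; exact hr rfl
    rw [secondMoment_npauli2_swap, secondMoment_npauli2_eq_X_left μ Q hb]
  · by_cases hb : b = .I
    · subst hb
      exact secondMoment_npauli2_eq_X_left μ Q ha _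
    · rw [secondMoment_npauli2_eq_X_left μ Q ha, secondMoment_npauli2_eq_X_right μ Q _ hb]
      exact secondMoment_npauli2_eq_of_conj μ Q cnotGate cnotGate_conj_pauli2_X_I

end Invariance

theorem secondMoment_npauli2_of_ne_idLabel [IsProbabilityMeasure μ]
    {p q : PauliLabel × PauliLabel} (hp : p ≠ idLabel) (hq : q ≠ idLabel) :
    secondMoment μ (npauli2 p) (npauli2 q) = 1 / 15 := by
  have hsum : ∑ r, secondMoment μ (npauli2 r) (npauli2 q) = 1 := by
    rw [sum_secondMoment_of_completeness μ npauli2 npauli2_completeness, trace_npauli2_mul_self]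
  have hid : secondMoment μ (npauli2 idLabel) (npauli2 q) = 0 := by
    simp [secondMoment_npauli2_idLabel_left, trace_npauli2_of_ne_idLabel hq]
  have hcard : Fintype.card (PauliLabel × PauliLabel) = 16 := rfl
  rw [← Finset.add_sum_erase _ _ (Finset.mem_univ idLabel), hid, zero_add,
    Finset.sum_congr rfl fun r hr =>
      secondMoment_npauli2_eq_X_I μ _ (Finset.ne_of_mem_erase hr),
    Finset.sum_const, Finset.card_erase_of_mem (Finset.mem_univ _), Finset.card_univ, hcard,
    nsmul_eq_mul] at hsum
  rw [secondMoment_npauli2_eq_X_I μ _ hp]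
  linear_combination hsum / 15

end SecondMoment

/-- Second moments of Haar random 2-qubit gates: for the Haar probability measure `μ` on
`U(4)` and normalized 2-qubit Paulis `p, q`, the integral `∫ Tr(p·U·q·U†)² dμ(U)` equals `1`
if `p = q = (I⊗I)/2`, `0` if exactly one of `p, q` is `(I⊗I)/2`, and `1/15` otherwise. -/
theorem haar_second_moment
    [MeasurableSpace (Matrix.unitaryGroup (Fin 4) ℂ)]
    [BorelSpace (Matrix.unitaryGroup (Fin 4) ℂ)]
    (μ : Measure (Matrix.unitaryGroup (Fin 4) ℂ))
    [μ.IsHaarMeasure] [IsProbabilityMeasure μ]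
    (p q : PauliLabel × PauliLabel) :
    (p = idLabel → q = idLabel →
      ∫ U : Matrix.unitaryGroup (Fin 4) ℂ,
        (npauli2 p * (U : Matrix (Fin 4) (Fin 4) ℂ) * npauli2 q *
          (U : Matrix (Fin 4) (Fin 4) ℂ)ᴴ).trace ^ 2 ∂μ = 1) ∧
    (p = idLabel → q ≠ idLabel →
      ∫ U : Matrix.unitaryGroup (Fin 4) ℂ,
        (npauli2 p * (U : Matrix (Fin 4) (Fin 4) ℂ) * npauli2 q *
          (U : Matrix (Fin 4) (Fin 4) ℂ)ᴴ).trace ^ 2 ∂μ = 0) ∧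
    (p ≠ idLabel → q = idLabel →
      ∫ U : Matrix.unitaryGroup (Fin 4) ℂ,
        (npauli2 p * (U : Matrix (Fin 4) (Fin 4) ℂ) * npauli2 q *
          (U : Matrix (Fin 4) (Fin 4) ℂ)ᴴ).trace ^ 2 ∂μ = 0) ∧
    (p ≠ idLabel → q ≠ idLabel →
      ∫ U : Matrix.unitaryGroup (Fin 4) ℂ,
        (npauli2 p * (U : Matrix (Fin 4) (Fin 4) ℂ) * npauli2 q *
          (U : Matrix (Fin 4) (Fin 4) ℂ)ᴴ).trace ^ 2 ∂μ = 1 / 15) := by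
  refine ⟨fun hp hq => ?_, fun hp hq => ?_, fun hp hq => ?_,
    secondMoment_npauli2_of_ne_idLabel μ⟩
  · change secondMoment μ _ _ = 1
    rw [hp, hq, secondMoment_npauli2_idLabel_left, npauli2_idLabel, trace_smul, trace_one]
    norm_num
  · change secondMoment μ _ _ = 0
    rw [hp, secondMoment_npauli2_idLabel_left, trace_npauli2_of_ne_idLabel hq]
    norm_num
  · change secondMoment μ _ _ = 0
    rw [hq, secondMoment_npauli2_idLabel_right, trace_npauli2_of_ne_idLabel hp]
    norm_num
end

section
/- (Legal paths have weight at least d+1.) Fix a circuit architecture of depth d on n qubits. If s = (s_0, …, s_d) is a legal Pauli path with Hamming weight |s| > 0, then every layer s_i (for i = 0, …, d) has at least one non-identity entry; consequently |s| ≥ d + 1. -/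
instance : Fintype PauliLabel where
  elems := {PauliLabel.I, PauliLabel.X, PauliLabel.Y, PauliLabel.Z}
  complete := by intro x; cases x <;> simp

/-- A circuit architecture of depth `d` on `n` qubits: each layer `i ∈ {1,…,d}` is a
fixed-point-free involution `M i` of the qubit set (a perfect matching); the unordered pairs
`{j, M i j}` are the 2-qubit gates of layer `i`. -/
structure Architecture (n d : ℕ) where
  M : Fin d → Fin n → Fin n
  involutive : ∀ i j, M i (M i j) = j
  fixedPointFree : ∀ i j, M i j ≠ j

/-- A Pauli path is a tuple `s = (s_0, …, s_d)` of layers, each assigning a Pauli label to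
every qubit. -/
def PauliPath (n d : ℕ) : Type := Fin (d + 1) → Fin n → PauliLabel

/-- The Hamming weight of a Pauli path: the number of pairs `(i, j)` with `s i j ≠ I`. -/
def pathWeight {n d : ℕ} (s : PauliPath n d) : ℕ :=
  (Finset.univ.filter fun p : Fin (d + 1) × Fin n => s p.1 p.2 ≠ PauliLabel.I).card

/-- A Pauli path is legal if (1) for every layer `i ∈ {1,…,d}` and every gate `{j, M i j}`,
the input pair `(s_{i−1} j, s_{i−1} (M i j))` is `(I, I)` iff the output pair
`(s_i j, s_i (M i j))` is `(I, I)`, and (2) `s_0` and `s_d` take values only in `{I, Z}`. -/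
def IsLegal {n d : ℕ} (A : Architecture n d) (s : PauliPath n d) : Prop :=
  (∀ (i : Fin d) (j : Fin n),
      ((s i.castSucc j = PauliLabel.I ∧ s i.castSucc (A.M i j) = PauliLabel.I) ↔
        (s i.succ j = PauliLabel.I ∧ s i.succ (A.M i j) = PauliLabel.I))) ∧
  (∀ j, s 0 j = PauliLabel.I ∨ s 0 j = PauliLabel.Z) ∧
  (∀ j, s (Fin.last d) j = PauliLabel.I ∨ s (Fin.last d) j = PauliLabel.Z)

namespace IsLegal

variable {n d : ℕ} {A : Architecture n d} {s : PauliPath n d}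

theorem forall_eq_I_castSucc_iff_succ (hs : IsLegal A s) (i : Fin d) :
    (∀ j, s i.castSucc j = PauliLabel.I) ↔ ∀ j, s i.succ j = PauliLabel.I :=
  ⟨fun h j => ((hs.1 i j).mp ⟨h j, h (A.M i j)⟩).1,
    fun h j => ((hs.1 i j).mpr ⟨h j, h (A.M i j)⟩).1⟩

theorem forall_eq_I_iff_zero (hs : IsLegal A s) (i : Fin (d + 1)) :
    (∀ j, s i j = PauliLabel.I) ↔ ∀ j, s 0 j = PauliLabel.I := by
  induction i using Fin.induction with
  | zero => rfl
  | succ i ih => exact (hs.forall_eq_I_castSucc_iff_succ i).symm.trans ih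

theorem forall_eq_I_iff (hs : IsLegal A s) (i i' : Fin (d + 1)) :
    (∀ j, s i j = PauliLabel.I) ↔ ∀ j, s i' j = PauliLabel.I :=
  (hs.forall_eq_I_iff_zero i).trans (hs.forall_eq_I_iff_zero i').symm

end IsLegal

theorem pathWeight_pos_iff {n d : ℕ} {s : PauliPath n d} :
    0 < pathWeight s ↔ ∃ i j, s i j ≠ PauliLabel.I := by
  simp [pathWeight, Finset.card_pos, Finset.Nonempty]

theorem succ_le_pathWeight {n d : ℕ} {s : PauliPath n d}
    (h : ∀ i, ∃ j, s i j ≠ PauliLabel.I) : d + 1 ≤ pathWeight s := by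
  choose f hf using h
  unfold pathWeight
  simpa using Finset.card_le_card_of_injOn (fun i => (i, f i)) (s := Finset.univ)
    (fun i _ => by simpa using hf i) (fun i _ i' _ hii' => congrArg Prod.fst hii')

theorem legal_path_weight_lower_bound_general (n d : ℕ)
    (A : Architecture n d) (s : PauliPath n d) (hs : IsLegal A s) (hw : 0 < pathWeight s) :
    (∀ i : Fin (d + 1), ∃ j : Fin n, s i j ≠ PauliLabel.I) ∧ d + 1 ≤ pathWeight s := by
  obtain ⟨i₀, j₀, hi₀⟩ := pathWeight_pos_iff.mp hw
  have hlayer : ∀ i, ∃ j, s i j ≠ PauliLabel.I := fun i => by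
    by_contra! hi
    exact hi₀ ((hs.forall_eq_I_iff i i₀).mp hi j₀)
  exact ⟨hlayer, succ_le_pathWeight hlayer⟩

/-- A legal Pauli path of positive Hamming weight has a non-identity entry in every layer,
and consequently has Hamming weight at least `d + 1`. -/
theorem legal_path_weight_lower_bound (n d : ℕ) (hn : Even n) (hn0 : 0 < n) (hd : 1 ≤ d)
    (A : Architecture n d) (s : PauliPath n d) (hs : IsLegal A s) (hw : 0 < pathWeight s) :
    (∀ i : Fin (d + 1), ∃ j : Fin n, s i j ≠ PauliLabel.I) ∧ d + 1 ≤ pathWeight s :=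
  legal_path_weight_lower_bound_general n d A s hs hw
end

section
/- (Upper bound on the number of low-weight legal paths.) Fix a circuit architecture of depth d on n qubits and let ℓ ≥ d + 1 be an integer. The number of legal Pauli paths s with 1 ≤ |s| ≤ ℓ is at most ℓ · n^{⌈ℓ/d⌉} · 18^ℓ. -/
/-!
Pick a layer `c` of least weight; it carries at most `ℓ / (d + 1) ≤ ⌈ℓ / d⌉` non-identity labels,
and by legality every layer of a nonzero path is nonempty, so its support is the range of a map
`Fin ⌈ℓ / d⌉ → Fin n`. Legality says that the support of a layer decides which gates of the adjacent
gate layer are active, and the next layer is supported on the qubits of those gates. Exploring the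
path from `c` outward, it is therefore determined by `c`, the support of layer `c`, and the list of
labels of each newly reached layer on the qubits of the active gates. Each such gate set has at most
twice as many qubits as the support of the new layer, so the list has length at most `2ℓ`; padded
with `I`, it is a word of length `2ℓ`, and the block lengths are recovered while decoding. This
gives at most `ℓ · n^⌈ℓ/d⌉ · 4^(2ℓ) ≤ ℓ · n^⌈ℓ/d⌉ · 18^ℓ` paths.
-/

open Finset Function

lemma List.eq_and_getD_eq_of_getD_append_eq {α : Type*} {B B' R R' : List α} {a : α}
    (hlen : B.length = B'.length) (h : ∀ p, (B ++ R).getD p a = (B' ++ R').getD p a) :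
    B = B' ∧ ∀ p, R.getD p a = R'.getD p a := by
  refine ⟨List.ext_getElem hlen fun q hq hq' => ?_, fun p => ?_⟩
  · have hBq := h q
    rwa [List.getD_append _ _ _ _ hq, List.getD_append _ _ _ _ hq', List.getD_eq_getElem _ _ hq,
      List.getD_eq_getElem _ _ hq'] at hBq
  · have hp := h (B.length + p)
    rwa [List.getD_append_right _ _ _ _ (by omega), List.getD_append_right _ _ _ _ (by omega),
      Nat.add_sub_cancel_left, hlen, Nat.add_sub_cancel_left] at hp

lemma List.getD_eq_getD_of_length_le {α : Type*} {L L' : List α} {a : α} {m : ℕ}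
    (hL : L.length ≤ m) (hL' : L'.length ≤ m) (h : ∀ p < m, L.getD p a = L'.getD p a) (p : ℕ) :
    L.getD p a = L'.getD p a := by
  rcases lt_or_ge p m with hp | hp
  · exact h p hp
  · rw [List.getD_eq_default _ _ (by omega), List.getD_eq_default _ _ (by omega)]

lemma Finset.exists_fin_range_eq {α : Type*} {T : Finset α} (hT : T.Nonempty) {k : ℕ}
    (hk : T.card ≤ k) : ∃ e : Fin k → α, Set.range e = T := by
  have : Nonempty T := hT.to_subtype
  have hinj : Injective (Fin.castLE hk ∘ T.equivFin) :=
    (Fin.castLE_injective hk).comp T.equivFin.injective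
  refine ⟨Subtype.val ∘ invFun (Fin.castLE hk ∘ T.equivFin), ?_⟩
  rw [Set.range_comp, (invFun_surjective hinj).range_eq, Set.image_univ, Subtype.range_coe]

lemma PauliLabel.fintype_card : Fintype.card PauliLabel = 4 := rfl

abbrev PauliString (n : ℕ) : Type := Fin n → PauliLabel

namespace PauliString

variable {n : ℕ}

def support (g : PauliString n) : Finset (Fin n) :=
  univ.filter fun j => g j ≠ .I

def activeQubits (N : Fin n → Fin n) (g : PauliString n) : Finset (Fin n) :=
  univ.filter fun j => g j ≠ .I ∨ g (N j) ≠ .I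

def GateCompatible (N : Fin n → Fin n) (g h : PauliString n) : Prop :=
  ∀ j, (g j = .I ∧ g (N j) = .I) ↔ (h j = .I ∧ h (N j) = .I)

def labelsOn (T : Finset (Fin n)) (g : PauliString n) : List PauliLabel :=
  (T.sort (· ≤ ·)).map g

variable {N : Fin n → Fin n} {g h : PauliString n}

@[simp]
lemma mem_support {j : Fin n} : j ∈ support g ↔ g j ≠ .I := by
  simp [support]

lemma support_eq_empty_iff : support g = ∅ ↔ ∀ j, g j = .I := by
  simp [Finset.eq_empty_iff_forall_notMem]

lemma GateCompatible.symm (hgh : GateCompatible N g h) : GateCompatible N h g :=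
  fun j => (hgh j).symm

lemma GateCompatible.activeQubits_eq (hgh : GateCompatible N g h) :
    activeQubits N g = activeQubits N h := by
  ext j
  simp only [activeQubits, mem_filter, mem_univ, true_and, ← not_and_or]
  exact not_congr (hgh j)

lemma support_subset_activeQubits : support g ⊆ activeQubits N g := by
  intro j hj
  simp_all [activeQubits]

lemma card_activeQubits_le (hN : Involutive N) :
    (activeQubits N g).card ≤ 2 * (support g).card := by
  classical
  have hsub : activeQubits N g ⊆ support g ∪ (support g).image N := by
    intro j hj
    simp only [activeQubits, mem_filter, mem_univ, true_and] at hj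
    rcases hj with hj | hj
    · exact mem_union_left _ (mem_support.2 hj)
    · exact mem_union_right _ (mem_image.2 ⟨N j, mem_support.2 hj, hN j⟩)
  calc (activeQubits N g).card ≤ (support g ∪ (support g).image N).card := card_le_card hsub
    _ ≤ (support g).card + ((support g).image N).card := card_union_le _ _
    _ ≤ 2 * (support g).card := by have := card_image_le (s := support g) (f := N); omega

lemma GateCompatible.support_eq_empty_iff (hgh : GateCompatible N g h) :
    support g = ∅ ↔ support h = ∅ := by
  simp only [PauliString.support_eq_empty_iff]
  exact ⟨fun hg j => ((hgh j).1 ⟨hg j, hg (N j)⟩).1, fun hh j => ((hgh j).2 ⟨hh j, hh (N j)⟩).1⟩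

lemma length_labelsOn (T : Finset (Fin n)) : (labelsOn T g).length = T.card := by
  simp [labelsOn]

lemma eq_of_labelsOn_eq {T : Finset (Fin n)} (hg : support g ⊆ T) (hh : support h ⊆ T)
    (hgh : labelsOn T g = labelsOn T h) : g = h := by
  funext j
  by_cases hj : j ∈ T
  · exact List.map_inj_left.1 hgh j ((mem_sort _).2 hj)
  · have hgj : g j = .I := by simpa using mt (@hg j) hj
    have hhj : h j = .I := by simpa using mt (@hh j) hj
    rw [hgj, hhj]

end PauliString

open PauliString

def chainCode {n : ℕ} (N : ℕ → Fin n → Fin n) (f : ℕ → PauliString n) : ℕ → List PauliLabel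
  | 0 => []
  | m + 1 => chainCode N f m ++ labelsOn (activeQubits (N m) (f m)) (f (m + 1))

section Chain

variable {n : ℕ} {N : ℕ → Fin n → Fin n} {f f' : ℕ → PauliString n} {m : ℕ}

lemma length_chainCode_le (hN : ∀ t, Involutive (N t))
    (hf : ∀ t < m, GateCompatible (N t) (f t) (f (t + 1))) :
    (chainCode N f m).length ≤ 2 * ∑ t ∈ range m, (support (f (t + 1))).card := by
  induction m with
  | zero => simp [chainCode]
  | succ m ih =>
    have hstep : (activeQubits (N m) (f m)).card ≤ 2 * (support (f (m + 1))).card := by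
      rw [(hf m m.lt_succ_self).activeQubits_eq]
      exact card_activeQubits_le (hN m)
    have := ih fun t ht => hf t (by omega)
    rw [chainCode, List.length_append, length_labelsOn, sum_range_succ]
    omega

lemma eq_of_getD_chainCode_append_eq (hf : ∀ t < m, GateCompatible (N t) (f t) (f (t + 1)))
    (hf' : ∀ t < m, GateCompatible (N t) (f' t) (f' (t + 1))) (h0 : f 0 = f' 0)
    {R R' : List PauliLabel}
    (h : ∀ p, (chainCode N f m ++ R).getD p .I = (chainCode N f' m ++ R').getD p .I) :
    (∀ t ≤ m, f t = f' t) ∧ ∀ p, R.getD p .I = R'.getD p .I := by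
  induction m generalizing R R' with
  | zero => exact ⟨fun t ht => by rwa [Nat.le_zero.1 ht], by simpa [chainCode] using h⟩
  | succ m ih =>
    simp only [chainCode, List.append_assoc] at h
    obtain ⟨hle, hrest⟩ := ih (fun t ht => hf t (by omega)) (fun t ht => hf' t (by omega)) h
    have hact : activeQubits (N m) (f m) = activeQubits (N m) (f' m) := by rw [hle m le_rfl]
    obtain ⟨hblock, hR⟩ := List.eq_and_getD_eq_of_getD_append_eq
      (by rw [length_labelsOn, length_labelsOn, hact]) hrest
    rw [hact] at hblock
    have hsucc : f (m + 1) = f' (m + 1) := by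
      refine eq_of_labelsOn_eq ?_ ?_ hblock
      · rw [← hact, (hf m m.lt_succ_self).activeQubits_eq]
        exact support_subset_activeQubits
      · rw [(hf' m m.lt_succ_self).activeQubits_eq]
        exact support_subset_activeQubits
    refine ⟨fun t ht => ?_, hR⟩
    rcases Nat.lt_or_eq_of_le ht with ht | rfl
    · exact hle t (by omega)
    · exact hsucc

end Chain

namespace Architecture

variable {n d : ℕ}

def gate (A : Architecture n d) (i : ℕ) : Fin n → Fin n :=
  if h : i < d then A.M ⟨i, h⟩ else id

lemma involutive_gate (A : Architecture n d) (i : ℕ) : Involutive (A.gate i) := by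
  unfold gate
  split_ifs with h
  exacts [A.involutive ⟨i, h⟩, fun _ => rfl]

end Architecture

namespace PauliPath

variable {n d : ℕ}

def layer (s : PauliPath n d) (i : ℕ) : PauliString n :=
  if h : i < d + 1 then s ⟨i, h⟩ else fun _ => .I

lemma layer_val (s : PauliPath n d) (i : Fin (d + 1)) : s.layer i = s i := by
  rw [layer, dif_pos i.isLt]

lemma pathWeight_eq_sum (s : PauliPath n d) :
    pathWeight s = ∑ i ∈ range (d + 1), (support (s.layer i)).card := by
  rw [← Fin.sum_univ_eq_sum_range, pathWeight, card_filter, Fintype.sum_prod_type]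
  refine sum_congr rfl fun i _ => ?_
  rw [layer_val, PauliString.support, card_filter]

lemma exists_layer_mul_card_support_le (s : PauliPath n d) :
    ∃ c ≤ d, (d + 1) * (support (s.layer c)).card ≤ pathWeight s := by
  obtain ⟨c, hc, hle⟩ := exists_le_of_sum_le (nonempty_range_add_one (n := d))
    (f := fun i => (d + 1) * (support (s.layer i)).card) (g := fun _ => pathWeight s)
    (by rw [← mul_sum, sum_const, card_range, smul_eq_mul, pathWeight_eq_sum])
  exact ⟨c, Nat.lt_succ_iff.1 (mem_range.1 hc), hle⟩

/-- The labels met when exploring `s` outward from layer `c`: layer `c` on its support, then the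
layers `c + 1, …, d` and `c - 1, …, 0`, each on the qubits of the gates activated by its explored
neighbour. -/
def explorationCode (A : Architecture n d) (s : PauliPath n d) (c : ℕ) : List PauliLabel :=
  labelsOn (support (s.layer c)) (s.layer c) ++
    (chainCode (fun t => A.gate (c + t)) (fun t => s.layer (c + t)) (d - c) ++
      chainCode (fun t => A.gate (c - t - 1)) (fun t => s.layer (c - t)) c)

end PauliPath

namespace IsLegal

open PauliPath

variable {n d : ℕ} {A : Architecture n d} {s s' : PauliPath n d} {c : ℕ}

lemma gateCompatible (hs : IsLegal A s) {i : ℕ} (hi : i < d) :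
    GateCompatible (A.gate i) (s.layer i) (s.layer (i + 1)) := by
  intro j
  rw [Architecture.gate, layer, layer, dif_pos hi, dif_pos (by omega), dif_pos (by omega)]
  exact hs.1 ⟨i, hi⟩ j

lemma gateCompatible_forward (hs : IsLegal A s) {t : ℕ} (ht : t < d - c) :
    GateCompatible (A.gate (c + t)) (s.layer (c + t)) (s.layer (c + (t + 1))) :=
  hs.gateCompatible (by omega)

lemma gateCompatible_backward (hs : IsLegal A s) (hc : c ≤ d) {t : ℕ} (ht : t < c) :
    GateCompatible (A.gate (c - t - 1)) (s.layer (c - t)) (s.layer (c - (t + 1))) := by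
  have h := (hs.gateCompatible (i := c - t - 1) (by omega)).symm
  rwa [show c - t - 1 + 1 = c - t by omega, ← Nat.sub_add_eq] at h

lemma support_layer_nonempty (hs : IsLegal A s) (hw : pathWeight s ≠ 0) {i : ℕ} (hi : i ≤ d) :
    (support (s.layer i)).Nonempty := by
  have hzero : ∀ i ≤ d, (support (s.layer i) = ∅ ↔ support (s.layer 0) = ∅) := by
    intro i hi
    induction i with
    | zero => rfl
    | succ i ih => exact ((hs.gateCompatible hi).support_eq_empty_iff.symm.trans (ih (by omega)))
  rw [pathWeight_eq_sum] at hw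
  obtain ⟨i₀, hi₀, hne⟩ := exists_ne_zero_of_sum_ne_zero hw
  rw [nonempty_iff_ne_empty, Ne, hzero i hi, ← hzero i₀ (by simpa [Nat.lt_succ_iff] using hi₀)]
  exact fun h => hne (by rw [h, card_empty])

lemma length_explorationCode_le (hs : IsLegal A s) (hc : c ≤ d) :
    (explorationCode A s c).length ≤ 2 * pathWeight s := by
  set w : ℕ → ℕ := fun i => (support (s.layer i)).card
  have hfwd := length_chainCode_le (fun t => A.involutive_gate (c + t))
    (fun t ht => hs.gateCompatible_forward (c := c) ht)
  have hbwd := length_chainCode_le (fun t => A.involutive_gate (c - t - 1))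
    (fun t ht => hs.gateCompatible_backward hc ht)
  have hsplit :
      pathWeight s = ∑ i ∈ range c, w i + (∑ t ∈ range (d - c), w (c + (t + 1)) + w c) := by
    rw [pathWeight_eq_sum, show d + 1 = c + (d - c + 1) by omega, sum_range_add, sum_range_succ']
    rfl
  have hreflect : ∑ t ∈ range c, w (c - (t + 1)) = ∑ i ∈ range c, w i := by
    rw [← sum_range_reflect w c]
    exact sum_congr rfl fun t _ => by congr 1; omega
  rw [explorationCode, List.length_append, List.length_append, length_labelsOn]
  simp only [w] at hsplit hreflect
  omega

lemma eq_of_getD_explorationCode_eq (hs : IsLegal A s) (hs' : IsLegal A s') (hc : c ≤ d)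
    (hsupp : support (s.layer c) = support (s'.layer c))
    (h : ∀ p, (explorationCode A s c).getD p .I = (explorationCode A s' c).getD p .I) :
    s = s' := by
  obtain ⟨hcenter, h⟩ := List.eq_and_getD_eq_of_getD_append_eq
    (by rw [length_labelsOn, length_labelsOn, hsupp]) h
  rw [hsupp] at hcenter
  replace hcenter := eq_of_labelsOn_eq (hsupp ▸ subset_rfl) subset_rfl hcenter
  obtain ⟨hfwd, h⟩ := eq_of_getD_chainCode_append_eq (N := fun t => A.gate (c + t))
    (f := fun t => s.layer (c + t)) (f' := fun t => s'.layer (c + t))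
    (fun t ht => hs.gateCompatible_forward ht) (fun t ht => hs'.gateCompatible_forward ht)
    hcenter h
  obtain ⟨hbwd, -⟩ := eq_of_getD_chainCode_append_eq (N := fun t => A.gate (c - t - 1))
    (f := fun t => s.layer (c - t)) (f' := fun t => s'.layer (c - t)) (R := []) (R' := [])
    (fun t ht => hs.gateCompatible_backward hc ht) (fun t ht => hs'.gateCompatible_backward hc ht)
    hcenter (by simpa using h)
  funext i
  rw [← layer_val s i, ← layer_val s' i]
  rcases le_or_gt c i with hi | hi
  · simpa [Nat.add_sub_cancel' hi] using hfwd (i - c) (by omega)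
  · simpa [Nat.sub_sub_self hi.le] using hbwd (c - i) (by omega)

lemma eq_of_getD_explorationCode_eq_of_lt {ℓ : ℕ} (hs : IsLegal A s) (hs' : IsLegal A s')
    (hc : c ≤ d) (hsupp : support (s.layer c) = support (s'.layer c)) (hw : pathWeight s ≤ ℓ)
    (hw' : pathWeight s' ≤ ℓ)
    (h : ∀ p < 2 * ℓ, (explorationCode A s c).getD p .I = (explorationCode A s' c).getD p .I) :
    s = s' :=
  hs.eq_of_getD_explorationCode_eq hs' hc hsupp <| List.getD_eq_getD_of_length_le
    ((hs.length_explorationCode_le hc).trans (by omega))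
    ((hs'.length_explorationCode_le hc).trans (by omega)) h

lemma exists_range_eq_support_layer {ℓ : ℕ} (hs : IsLegal A s) (hd : 0 < d)
    (hw : pathWeight s ≠ 0) (hwℓ : pathWeight s ≤ ℓ) :
    ∃ c ≤ d, ∃ e : Fin (ℓ ⌈/⌉ d) → Fin n, Set.range e = support (s.layer c) := by
  obtain ⟨c, hcd, hc⟩ := exists_layer_mul_card_support_le s
  have hk : (support (s.layer c)).card ≤ ℓ ⌈/⌉ d := by
    rw [Nat.ceilDiv_eq_add_pred_div, Nat.le_div_iff_mul_le hd]
    have : (support (s.layer c)).card * d ≤ ℓ := by nlinarith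
    omega
  exact ⟨c, hcd, exists_fin_range_eq (hs.support_layer_nonempty hw hcd) hk⟩

end IsLegal

open PauliPath

theorem count_low_weight_legal_paths_general (n d ℓ : ℕ) (hd : 1 ≤ d)
    (hℓ : d + 1 ≤ ℓ) (A : Architecture n d) :
    Nat.card {s : PauliPath n d // IsLegal A s ∧ 1 ≤ pathWeight s ∧ pathWeight s ≤ ℓ}
      ≤ ℓ * n ^ (ℓ ⌈/⌉ d) * 18 ^ ℓ := by
  have hcenter : ∀ s : {s : PauliPath n d // IsLegal A s ∧ 1 ≤ pathWeight s ∧ pathWeight s ≤ ℓ},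
      ∃ c : Fin ℓ, ∃ e : Fin (ℓ ⌈/⌉ d) → Fin n,
        (c : ℕ) ≤ d ∧ Set.range e = support (s.1.layer c) := by
    rintro ⟨s, hs, hw1, hwℓ⟩
    obtain ⟨c, hcd, e, he⟩ := hs.exists_range_eq_support_layer hd (by omega) hwℓ
    exact ⟨⟨c, by omega⟩, e, hcd, he⟩
  choose c e hcd he using hcenter
  let code s := (c s, e s, fun p : Fin (2 * ℓ) => (explorationCode A s.1 (c s)).getD p .I)
  have hinj : Injective code := by
    intro x y hxy
    simp only [code, Prod.mk.injEq] at hxy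
    obtain ⟨hc, hexy, hcode⟩ := hxy
    refine Subtype.ext (x.2.1.eq_of_getD_explorationCode_eq_of_lt y.2.1 (hcd x) ?_ x.2.2.2 y.2.2.2
      fun p hp => ?_)
    · exact coe_injective (by rw [← he, hexy, he, hc])
    · simpa [hc] using congrFun hcode ⟨p, hp⟩
  calc _ ≤ Nat.card (Fin ℓ × (Fin (ℓ ⌈/⌉ d) → Fin n) × (Fin (2 * ℓ) → PauliLabel)) :=
        Nat.card_le_card_of_injective code hinj
    _ = ℓ * n ^ (ℓ ⌈/⌉ d) * 16 ^ ℓ := by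
      simp only [Nat.card_eq_fintype_card, Fintype.card_prod, Fintype.card_fun, Fintype.card_fin,
        PauliLabel.fintype_card, pow_mul]
      norm_num [mul_assoc]
    _ ≤ _ := by gcongr; norm_num

/-- For `ℓ ≥ d + 1`, the number of legal Pauli paths of Hamming weight between `1` and `ℓ`
is at most `ℓ · n^{⌈ℓ/d⌉} · 18^ℓ`. -/
theorem count_low_weight_legal_paths (n d ℓ : ℕ) (hn : Even n) (hn0 : 0 < n) (hd : 1 ≤ d)
    (hℓ : d + 1 ≤ ℓ) (A : Architecture n d) :
    Nat.card {s : PauliPath n d // IsLegal A s ∧ 1 ≤ pathWeight s ∧ pathWeight s ≤ ℓ}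
      ≤ ℓ * n ^ (ℓ ⌈/⌉ d) * 18 ^ ℓ :=
  count_low_weight_legal_paths_general n d ℓ hd hℓ A
end
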